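/- arXiv:1306.3544 — 2 statements merged into one kernel-verified Lean document; each statement's English description precedes it below -/
import Mathlib

section
/- The function μ(x) = (1/(π²x))·log|(x+1)/(x-1)| is a probability density on ℝ; that is, ∫_{-∞}^{∞} (1/(π²x))·log|(x+1)/(x-1)| dx = 1. -/
open MeasureTheory

open Real Set in
/-- auxiliary density without the `π²` factor -/
noncomputable def densG (x : ℝ) : ℝ := (1 / x) * Real.log |(x + 1) / (x - 1)|

open Real Set in
lemma densG_neg (x : ℝ) : densG (-x) = densG x := by
  unfold densG
  have h : (-x + 1) / (-x - 1) = (x - 1) / (x + 1) := by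
    rw [show (-x + 1) = -(x - 1) by ring, show (-x - 1) = -(x + 1) by ring, neg_div_neg_eq]
  have h2 : |(x - 1) / (x + 1)| = |(x + 1) / (x - 1)|⁻¹ := by
    rw [← abs_inv, inv_div]
  rw [h, h2, Real.log_inv]
  ring

open Real Set in
lemma densG_nonneg (x : ℝ) : 0 ≤ densG x := by
  have key : ∀ y : ℝ, 0 ≤ y → 0 ≤ densG y := by
    intro y hy
    unfold densG
    rcases eq_or_ne y 1 with rfl | hy1
    · norm_num
    · have h1 : (1 : ℝ) ≤ |(y + 1) / (y - 1)| := by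
        rw [abs_div]
        rw [le_div_iff₀ (abs_pos.mpr (sub_ne_zero.mpr hy1))]
        rw [one_mul]
        have : |y - 1| ≤ y + 1 := by
          rw [abs_le]
          constructor <;> [linarith; linarith]
        calc |y - 1| ≤ y + 1 := this
          _ ≤ |y + 1| := le_abs_self _
      exact mul_nonneg (by positivity) (Real.log_nonneg h1)
  rcases le_total 0 x with hx | hx
  · exact key x hx
  · rw [← densG_neg]
    exact key (-x) (by linarith)

open Real Set in
lemma densG_meas : Measurable densG := by
  unfold densG
  exact (measurable_const.div measurable_id).mul
    (Real.measurable_log.comp (((measurable_id.add_const 1).div (measurable_id.sub_const 1)).abs))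

open Real Set in
lemma hasSum_odd_sq : HasSum (fun k : ℕ => (2 : ℝ) / (2 * (k : ℝ) + 1) ^ 2) (π ^ 2 / 4) := by
  set f : ℕ → ℝ := fun n => 1 / (n : ℝ) ^ 2 with hf
  have hz : HasSum f (π ^ 2 / 6) := hasSum_zeta_two
  have he : HasSum (fun k : ℕ => f (2 * k)) (π ^ 2 / 24) := by
    have h4 := hz.mul_left (1 / 4)
    have : (fun k : ℕ => (1 / 4 : ℝ) * f k) = fun k : ℕ => f (2 * k) := by
      funext k
      simp only [hf]
      push_cast
      rw [div_mul_div_comm, mul_pow]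
      norm_num
    rw [this] at h4
    convert h4 using 1
    · rfl
    ring
  have hsm : Summable (fun k : ℕ => f (2 * k + 1)) :=
    hz.summable.comp_injective (fun a b hab => by omega)
  have ho : HasSum (fun k : ℕ => f (2 * k + 1)) (∑' k, f (2 * k + 1)) := hsm.hasSum
  have htot := he.even_add_odd ho
  have hO : ∑' k, f (2 * k + 1) = π ^ 2 / 8 := by
    have := htot.unique hz
    linarith
  rw [hO] at ho
  have h2 := ho.mul_left 2
  have heq : (fun k : ℕ => (2 : ℝ) * f (2 * k + 1)) =
      fun k : ℕ => (2 : ℝ) / (2 * (k : ℝ) + 1) ^ 2 := by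
    funext k
    simp only [hf]
    push_cast
    ring
  rw [heq] at h2
  convert h2 using 1
  · rfl
  ring

open Real Set in
/-- one-variable lintegral change of variables -/
lemma lint_image {s : Set ℝ} {f f' : ℝ → ℝ} (hs : MeasurableSet s)
    (hf' : ∀ x ∈ s, HasDerivWithinAt f (f' x) s x) (hf : Set.InjOn f s) (g : ℝ → ENNReal) :
    ∫⁻ x in f '' s, g x = ∫⁻ x in s, ENNReal.ofReal |f' x| * g (f x) := by
  simpa only [ContinuousLinearMap.det_toSpanSingleton] using
    lintegral_image_eq_lintegral_abs_det_fderiv_mul volume hs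
      (fun x hx => (hf' x hx).hasFDerivWithinAt) hf g

open Real Set in
lemma lint_Ioo01 : ∫⁻ x in Ioo (0 : ℝ) 1, ENNReal.ofReal (densG x) = ENNReal.ofReal (π ^ 2 / 4) := by
  have key : ∀ x ∈ Ioo (0 : ℝ) 1,
      ENNReal.ofReal (densG x)
        = ∑' k : ℕ, ENNReal.ofReal ((2 / (2 * (k : ℝ) + 1)) * x ^ (2 * k)) := by
    intro x hx
    obtain ⟨hx0, hx1⟩ := hx
    have habs : |x| < 1 := by rw [abs_of_pos hx0]; exact hx1
    have hlog := Real.hasSum_log_sub_log_of_abs_lt_one habs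
    have hx0' : x ≠ 0 := ne_of_gt hx0
    have hsum : HasSum (fun k : ℕ => (2 / (2 * (k : ℝ) + 1)) * x ^ (2 * k)) (densG x) := by
      have h2 := hlog.mul_left (1 / x)
      have heq : (fun k : ℕ => (1 / x) * ((2 : ℝ) * (1 / (2 * (k : ℝ) + 1)) * x ^ (2 * k + 1)))
          = fun k : ℕ => (2 / (2 * (k : ℝ) + 1)) * x ^ (2 * k) := by
        funext k
        rw [pow_succ]
        field_simp
      rw [heq] at h2
      have hG : densG x = (1 / x) * (Real.log (1 + x) - Real.log (1 - x)) := by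
        unfold densG
        congr 1
        have h1 : (x + 1) / (x - 1) = -((1 + x) / (1 - x)) := by
          rw [show (x - 1) = -(1 - x) by ring, div_neg]
          ring_nf
        rw [h1, abs_neg, abs_div,
          abs_of_pos (by linarith : (0:ℝ) < 1 + x), abs_of_pos (by linarith : (0:ℝ) < 1 - x),
          Real.log_div (by linarith) (by linarith)]
      rw [hG]
      exact h2
    rw [← hsum.tsum_eq]
    exact ENNReal.ofReal_tsum_of_nonneg
      (fun k => by positivity) hsum.summable
  rw [setLIntegral_congr_fun measurableSet_Ioo key]
  rw [lintegral_tsum (fun k => by fun_prop)]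
  have hterm : ∀ k : ℕ, ∫⁻ x in Ioo (0 : ℝ) 1,
      ENNReal.ofReal ((2 / (2 * (k : ℝ) + 1)) * x ^ (2 * k))
        = ENNReal.ofReal (2 / (2 * (k : ℝ) + 1) ^ 2) := by
    intro k
    have hint : IntegrableOn (fun x : ℝ => (2 / (2 * (k : ℝ) + 1)) * x ^ (2 * k)) (Ioo 0 1) := by
      apply (Continuous.integrableOn_Icc (by continuity)).mono_set Ioo_subset_Icc_self
    rw [← ofReal_integral_eq_lintegral_ofReal hint
      (Filter.Eventually.of_forall (fun x => ?_))]
    · congr 1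
      rw [MeasureTheory.integral_const_mul]
      have : ∫ x in Ioo (0:ℝ) 1, x ^ (2 * k) = 1 / (2 * (k:ℝ) + 1) := by
        rw [← MeasureTheory.integral_Ioc_eq_integral_Ioo,
          ← intervalIntegral.integral_of_le (by norm_num : (0:ℝ) ≤ 1)]
        rw [integral_pow]
        push_cast
        rw [one_pow, zero_pow (by omega : 2 * k + 1 ≠ 0)]
        ring
      rw [this]
      rw [div_mul_div_comm]
      congr 1
      · ring
      · ring
    · exact mul_nonneg (by positivity) ((even_two_mul k).pow_nonneg x)
  simp_rw [hterm]
  rw [← ENNReal.ofReal_tsum_of_nonneg (fun k => by positivity) hasSum_odd_sq.summable,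
    hasSum_odd_sq.tsum_eq]

open Real Set in
lemma lint_Ioi1 : ∫⁻ x in Ioi (1 : ℝ), ENNReal.ofReal (densG x)
    = ∫⁻ x in Ioo (0 : ℝ) 1, ENNReal.ofReal (densG x) := by
  have himg : (fun x : ℝ => x⁻¹) '' Ioi 1 = Ioo 0 1 := by
    ext y
    simp only [mem_image, mem_Ioi, mem_Ioo]
    constructor
    · rintro ⟨x, hx, rfl⟩
      have hx0 : (0:ℝ) < x := lt_trans one_pos hx
      exact ⟨by positivity, inv_lt_one_of_one_lt₀ hx⟩
    · rintro ⟨hy0, hy1⟩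
      exact ⟨y⁻¹, (one_lt_inv₀ hy0).mpr hy1, by rw [inv_inv]⟩
  rw [← himg, lint_image (f' := fun x : ℝ => -(x ^ 2)⁻¹) measurableSet_Ioi
    (fun x hx => (hasDerivAt_inv (ne_of_gt (lt_trans one_pos hx))).hasDerivWithinAt)
    (fun a _ b _ hab => inv_injective hab)]
  apply setLIntegral_congr_fun measurableSet_Ioi
  intro x hx
  have hx1 : (1:ℝ) < x := hx
  have hx0 : (0:ℝ) < x := lt_trans one_pos hx1
  have hx0' : x ≠ 0 := ne_of_gt hx0
  beta_reduce
  rw [abs_neg, abs_inv, abs_pow, abs_of_pos hx0]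
  rw [← ENNReal.ofReal_mul (by positivity)]
  congr 1
  unfold densG
  have hlt : x⁻¹ < 1 := inv_lt_one_of_one_lt₀ hx1
  have habs : |(x⁻¹ + 1) / (x⁻¹ - 1)| = |(x + 1) / (x - 1)| := by
    rw [abs_div, abs_div, abs_of_pos (by positivity : (0:ℝ) < x⁻¹ + 1),
      abs_of_neg (by linarith : x⁻¹ - 1 < 0), abs_of_pos (by linarith : (0:ℝ) < x + 1),
      abs_of_pos (by linarith : (0:ℝ) < x - 1), neg_sub,
      div_eq_div_iff (by linarith) (by linarith)]
    field_simp
    ring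
  rw [habs, one_div, one_div, inv_inv, ← mul_assoc]
  congr 1
  rw [pow_two, mul_inv, mul_assoc, inv_mul_cancel₀ hx0', mul_one]

open Real Set in
lemma lint_Iio0 : ∫⁻ x in Iio (0 : ℝ), ENNReal.ofReal (densG x)
    = ∫⁻ x in Ioi (0 : ℝ), ENNReal.ofReal (densG x) := by
  have mp : MeasurePreserving (fun x : ℝ => -x) volume volume :=
    Measure.measurePreserving_neg _
  have emb : MeasurableEmbedding (fun x : ℝ => -x) :=
    (Homeomorph.neg ℝ).measurableEmbedding
  have h := mp.setLIntegral_comp_preimage_emb emb (fun x => ENNReal.ofReal (densG x)) (Iio 0)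
  have hpre : (fun x : ℝ => -x) ⁻¹' Iio 0 = Ioi 0 := by
    ext x; simp [neg_lt_zero]
  rw [hpre] at h
  rw [← h]
  apply lintegral_congr
  intro x
  rw [densG_neg]

open Real Set in
lemma lint_total : ∫⁻ x : ℝ, ENNReal.ofReal (densG x) = ENNReal.ofReal (π ^ 2) := by
  have key : ∫⁻ x in Ioi (0:ℝ), ENNReal.ofReal (densG x) = ENNReal.ofReal (π ^ 2 / 2) := by
    have hsplit : Ioo (0:ℝ) 1 ∪ Ici 1 = Ioi 0 := Ioo_union_Ici_eq_Ioi one_pos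
    rw [← hsplit, lintegral_union measurableSet_Ici
      (Set.disjoint_left.mpr (fun a ha hb => absurd hb (not_le.mpr ha.2)))]
    rw [← Measure.restrict_congr_set (Ioi_ae_eq_Ici (a := (1:ℝ)))]
    rw [lint_Ioo01, lint_Ioi1, lint_Ioo01, ← ENNReal.ofReal_add (by positivity) (by positivity)]
    congr 1
    ring
  rw [← lintegral_add_compl (fun x => ENNReal.ofReal (densG x)) (measurableSet_Iio (a := (0:ℝ)))]
  rw [compl_Iio]
  rw [← Measure.restrict_congr_set (Ioi_ae_eq_Ici (a := (0:ℝ)))]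
  rw [lint_Iio0, key, ← ENNReal.ofReal_add (by positivity) (by positivity)]
  congr 1
  ring

/-- The function `μ(x) = (1/(π²x))·log|(x+1)/(x-1)|` is a probability density on ℝ:
its Lebesgue integral over ℝ equals 1. -/
theorem stmt0 :
    ∫ x : ℝ, (1 / (Real.pi ^ 2 * x)) * Real.log |(x + 1) / (x - 1)| = 1 := by
  have h1 : ∀ x : ℝ, (1 / (Real.pi ^ 2 * x)) * Real.log |(x + 1) / (x - 1)|
      = (Real.pi ^ 2)⁻¹ * densG x := by
    intro x
    unfold densG
    rw [one_div, mul_inv, one_div]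
    ring
  simp_rw [h1]
  rw [MeasureTheory.integral_const_mul]
  have hG : ∫ x : ℝ, densG x = Real.pi ^ 2 := by
    rw [integral_eq_lintegral_of_nonneg_ae (Filter.Eventually.of_forall densG_nonneg)
      densG_meas.aestronglyMeasurable, lint_total,
      ENNReal.toReal_ofReal (by positivity)]
  rw [hG, inv_mul_cancel₀ (pow_ne_zero 2 Real.pi_ne_zero)]
end

section
/- 2·∫_0^1 (−log x)/(π²x) · log((1+x)/(1-x)) dx = 7ζ(3)/(2π²). -/
open MeasureTheory intervalIntegral Real Set


-- integrability of log on Ioc 0 1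
lemma log_integrableOn : IntegrableOn Real.log (Ioc (0:ℝ) 1) := by
  have key : ∀ i : ℕ, IntegrableOn Real.log (Ioc (1/((i:ℝ)+1)) 1) := by
    intro i
    have h : (0:ℝ) < 1/((i:ℝ)+1) := by positivity
    exact (intervalIntegrable_log (by
      simp only [Set.uIcc_of_le (by
        rw [div_le_one (by positivity)]; linarith [Nat.cast_nonneg (α := ℝ) i] : 1/((i:ℝ)+1) ≤ 1)]
      intro hc; exact absurd hc.1 (not_le.2 h))).1
  refine integrableOn_Ioc_of_intervalIntegral_norm_bounded_left
    (I := 1) (b := 1) (a := fun i : ℕ => 1/((i:ℝ)+1)) (l := Filter.atTop) key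
    tendsto_one_div_add_atTop_nhds_zero_nat ?_
  filter_upwards with i
  have h : (0:ℝ) < 1/((i:ℝ)+1) := by positivity
  have h1 : 1/((i:ℝ)+1) ≤ 1 := by
    rw [div_le_one (by positivity)]; linarith [Nat.cast_nonneg (α := ℝ) i]
  set a : ℝ := 1/((i:ℝ)+1)
  have : (∫ x in Ioc a 1, ‖Real.log x‖) = ∫ x in Ioc a 1, -Real.log x := by
    refine setIntegral_congr_fun measurableSet_Ioc fun x hx => ?_
    rw [Real.norm_eq_abs, abs_of_nonpos (Real.log_nonpos (le_of_lt (lt_of_lt_of_le h hx.1.le)) hx.2)]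
  rw [this, ← intervalIntegral.integral_of_le h1, intervalIntegral.integral_neg,
    integral_log]
  have hla : Real.log a ≤ 0 := Real.log_nonpos h.le h1
  nlinarith [Real.log_one, h.le, mul_nonneg h.le (neg_nonneg.2 hla)]

lemma integrable_mono_log (k : ℕ) :
    IntegrableOn (fun x : ℝ => -Real.log x * x ^ k) (Ioc (0:ℝ) 1) := by
  refine Integrable.mono log_integrableOn ?_ ?_
  · exact ((Real.measurable_log.neg.mul (measurable_id.pow_const k)).aestronglyMeasurable)
  · rw [ae_restrict_iff' measurableSet_Ioc]
    filter_upwards with x hx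
    have hx0 : 0 < x := hx.1
    have hx1 : x ≤ 1 := hx.2
    rw [Real.norm_eq_abs, Real.norm_eq_abs, abs_mul, abs_neg, abs_pow]
    calc |Real.log x| * |x| ^ k ≤ |Real.log x| * 1 := by
          gcongr
          exact pow_le_one₀ (abs_nonneg x) (abs_le.2 ⟨by linarith, hx1⟩)
      _ = |Real.log x| := mul_one _

lemma aux_integral (k : ℕ) :
    ∫ x in (0:ℝ)..1, -Real.log x * x ^ k = 1/((k:ℝ)+1)^2 := by
  have hk : ((k:ℝ)+1) ≠ 0 := by positivity
  set F : ℝ → ℝ := fun x => x^(k+1)/((k:ℝ)+1)^2 - x^(k+1) * Real.log x/((k:ℝ)+1) with hF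
  have hderiv : ∀ x ∈ Ioo (0:ℝ) 1, HasDerivAt F (-Real.log x * x ^ k) x := by
    intro x hx
    have hx0 : x ≠ 0 := ne_of_gt hx.1
    have h1 : HasDerivAt (fun x : ℝ => x^(k+1)) (((k:ℝ)+1) * x^k) x := by
      simpa using (hasDerivAt_pow (k+1) x)
    have h2 : HasDerivAt (fun x : ℝ => x^(k+1) * Real.log x)
        (((k:ℝ)+1) * x^k * Real.log x + x^(k+1) * x⁻¹) x :=
      h1.mul (Real.hasDerivAt_log hx0)
    have := (h1.div_const (((k:ℝ)+1)^2)).sub (h2.div_const ((k:ℝ)+1))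
    refine this.congr_deriv ?_
    have hxpow : x^(k+1) * x⁻¹ = x^k := by
      rw [pow_succ, mul_assoc, mul_inv_cancel₀ hx0, mul_one]
    rw [hxpow]
    field_simp
    ring
  have hint : IntervalIntegrable (fun x : ℝ => -Real.log x * x ^ k) volume 0 1 := by
    rw [intervalIntegrable_iff_integrableOn_Ioc_of_le zero_le_one]
    exact integrable_mono_log k
  have h0 : Filter.Tendsto F (nhdsWithin 0 (Ioi 0)) (nhds 0) := by
    have hpow : Filter.Tendsto (fun x : ℝ => x^(k+1)/((k:ℝ)+1)^2)
        (nhdsWithin 0 (Ioi 0)) (nhds 0) := by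
      have := ((continuous_pow (k+1)).tendsto 0).div_const (((k:ℝ)+1)^2)
      simpa using this.mono_left nhdsWithin_le_nhds
    have hlog : Filter.Tendsto (fun x : ℝ => x^(k+1) * Real.log x/((k:ℝ)+1))
        (nhdsWithin 0 (Ioi 0)) (nhds 0) := by
      have h := (tendsto_log_mul_rpow_nhdsGT_zero
        (r := (k:ℝ)+1) (by positivity)).div_const ((k:ℝ)+1)
      rw [zero_div] at h
      refine h.congr' ?_
      filter_upwards [self_mem_nhdsWithin] with x hx
      have hcast : ((k:ℝ)+1) = ((k+1 : ℕ) : ℝ) := by push_cast; ring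
      rw [hcast, Real.rpow_natCast]
      ring
    simpa using hpow.sub hlog
  have h1 : Filter.Tendsto F (nhdsWithin 1 (Iio 1)) (nhds (1/((k:ℝ)+1)^2)) := by
    have hc : ContinuousAt F 1 := by
      apply ContinuousAt.sub
      · exact (continuousAt_pow _ _).div_const _
      · exact (ContinuousAt.mul (continuousAt_pow _ _)
          (Real.continuousAt_log one_ne_zero)).div_const _
    have : F 1 = 1/((k:ℝ)+1)^2 := by simp [hF]
    rw [← this]
    exact hc.continuousWithinAt.tendsto
  have := intervalIntegral.integral_eq_sub_of_hasDerivAt_of_tendsto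
    one_pos hderiv hint h0 h1
  rw [this, sub_zero]

lemma sum_lemma : ∑' n : ℕ, (2:ℝ)/(2*(n:ℝ)+1)^3 = 7/4 * ∑' n : ℕ, 1/((n:ℝ)+1)^3 := by
  set f : ℕ → ℝ := fun n => 1/(n:ℝ)^3 with hf
  have hsumf : Summable f := summable_one_div_nat_pow.mpr (by norm_num)
  have he : Summable fun k => f (2*k) :=
    hsumf.comp_injective (mul_right_injective₀ two_ne_zero)
  have ho : Summable fun k => f (2*k+1) :=
    hsumf.comp_injective (fun a b h => by omega)
  have h1 : (∑' k, f (2*k)) + ∑' k, f (2*k+1) = ∑' k, f k := tsum_even_add_odd he ho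
  have h2 : ∑' k, f (2*k) = (1/8) * ∑' k, f k := by
    rw [← tsum_mul_left]
    refine tsum_congr fun k => ?_
    simp only [hf]
    have : ((2*k : ℕ) : ℝ)^3 = (k:ℝ)^3 * 8 := by push_cast; ring
    rw [this, ← div_div]
    ring
  have h3 : ∑' k, f k = ∑' n : ℕ, 1/((n:ℝ)+1)^3 := by
    rw [Summable.tsum_eq_zero_add hsumf]
    simp only [hf, Nat.cast_zero]
    norm_num
  have h4 : ∑' k, f (2*k+1) = 7/8 * ∑' n : ℕ, 1/((n:ℝ)+1)^3 := by
    have := h1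
    rw [h2, h3] at this
    linarith
  calc ∑' n : ℕ, (2:ℝ)/(2*(n:ℝ)+1)^3 = ∑' n : ℕ, 2 * f (2*n+1) := by
        refine tsum_congr fun n => ?_
        simp only [hf]
        push_cast
        rw [mul_one_div]
    _ = 2 * ∑' n, f (2*n+1) := tsum_mul_left
    _ = 7/4 * ∑' n : ℕ, 1/((n:ℝ)+1)^3 := by rw [h4]; ring

lemma hasSum_pointwise {x : ℝ} (hx : x ∈ Ioo (0:ℝ) 1) :
    HasSum (fun n : ℕ => 2*(1/(2*(n:ℝ)+1)) * (-Real.log x * x^(2*n)))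
      (-Real.log x / x * Real.log ((1+x)/(1-x))) := by
  have hx0 : (0:ℝ) < x := hx.1
  have hx1 : x < 1 := hx.2
  have habs : |x| < 1 := abs_lt.2 ⟨by linarith, hx1⟩
  have h := (Real.hasSum_log_sub_log_of_abs_lt_one habs).mul_left (-Real.log x / x)
  have hlog : Real.log ((1+x)/(1-x)) = Real.log (1+x) - Real.log (1-x) :=
    Real.log_div (by positivity) (by intro h; linarith [sub_eq_zero.mp h])
  rw [← hlog] at h
  refine h.congr_fun fun n => ?_
  have hxne : x ≠ 0 := ne_of_gt hx0
  rw [pow_succ]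
  field_simp

lemma summable_odd : Summable (fun n : ℕ => (2:ℝ)/(2*(n:ℝ)+1)^3) := by
  have hsumf : Summable (fun n : ℕ => 1/(n:ℝ)^3) := summable_one_div_nat_pow.mpr (by norm_num)
  have ho : Summable fun k : ℕ => (1:ℝ)/((2*k+1 : ℕ):ℝ)^3 :=
    hsumf.comp_injective (fun a b h => by omega)
  refine (ho.mul_left 2).congr fun n => ?_
  push_cast
  rw [mul_one_div]

/-- `2·∫_0^1 (−log x)/(π²x) · log((1+x)/(1-x)) dx = 7ζ(3)/(2π²)`,
where `ζ(3) = ∑_{n≥1} 1/n³`. -/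
theorem stmt4 :
    2 * ∫ x in (0 : ℝ)..1, (-Real.log x / (Real.pi ^ 2 * x)) * Real.log ((1 + x) / (1 - x)) =
      7 * (∑' n : ℕ, (1 : ℝ) / ((n : ℝ) + 1) ^ 3) / (2 * Real.pi ^ 2) := by
  have hπ : Real.pi ≠ 0 := Real.pi_ne_zero
  have hcong : (∫ x in (0:ℝ)..1,
        (-Real.log x / (Real.pi ^ 2 * x)) * Real.log ((1 + x) / (1 - x)))
      = (Real.pi^2)⁻¹ * ∫ x in (0:ℝ)..1,
        (-Real.log x / x) * Real.log ((1 + x) / (1 - x)) := by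
    rw [← intervalIntegral.integral_const_mul]
    refine intervalIntegral.integral_congr fun x _ => ?_
    rw [mul_comm (Real.pi^2) x, ← div_div]
    ring
  have hI : (∫ x in (0:ℝ)..1, (-Real.log x / x) * Real.log ((1 + x) / (1 - x)))
      = 7/4 * ∑' n : ℕ, (1:ℝ)/((n:ℝ)+1)^3 := by
    rw [intervalIntegral.integral_of_le zero_le_one,
      MeasureTheory.integral_Ioc_eq_integral_Ioo]
    set g : ℕ → ℝ → ℝ := fun n x => 2*(1/(2*(n:ℝ)+1)) * (-Real.log x * x^(2*n)) with hg
    have hgi : ∀ n, IntegrableOn (g n) (Ioo (0:ℝ) 1) := fun n =>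
      ((integrable_mono_log (2*n)).mono_set Ioo_subset_Ioc_self).const_mul _
    have hgval : ∀ n, ∫ x in Ioo (0:ℝ) 1, g n x = 2/(2*(n:ℝ)+1)^3 := by
      intro n
      simp only [hg]
      rw [MeasureTheory.integral_const_mul, ← MeasureTheory.integral_Ioc_eq_integral_Ioo,
        ← intervalIntegral.integral_of_le zero_le_one, aux_integral (2*n)]
      have h2n : ((2*n:ℕ):ℝ) = 2*(n:ℝ) := by push_cast; ring
      rw [h2n]
      have h0 : (0:ℝ) < 2*(n:ℝ)+1 := by positivity
      field_simp
    have hmeas : ∀ n, AEStronglyMeasurable (g n) (volume.restrict (Ioo (0:ℝ) 1)) := fun n =>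
      ((Real.measurable_log.neg.mul (measurable_id.pow_const (2*n))).const_mul
        _).aestronglyMeasurable
    have hnonneg : ∀ n, 0 ≤ᵐ[volume.restrict (Ioo (0:ℝ) 1)] g n := by
      intro n
      refine (ae_restrict_iff' measurableSet_Ioo).2 ?_
      filter_upwards with x hx
      have h1 : 0 ≤ -Real.log x := neg_nonneg.2 (Real.log_nonpos hx.1.le hx.2.le)
      have h2 : (0:ℝ) ≤ 2*(1/(2*(n:ℝ)+1)) := by positivity
      exact mul_nonneg h2 (mul_nonneg h1 (pow_nonneg hx.1.le _))
    have hlint : ∀ n, ∫⁻ x in Ioo (0:ℝ) 1, ‖g n x‖₊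
        = ENNReal.ofReal (2/(2*(n:ℝ)+1)^3) := by
      intro n
      rw [← hgval n, ofReal_integral_eq_lintegral_ofReal (hgi n) (hnonneg n)]
      refine lintegral_congr_ae ?_
      filter_upwards [hnonneg n] with x hx
      rw [← Real.enorm_eq_ofReal hx]
      exact (enorm_eq_nnnorm _).symm
    have hfin : (∑' n, ∫⁻ x in Ioo (0:ℝ) 1, ‖g n x‖₊) ≠ ⊤ := by
      rw [tsum_congr hlint, ← ENNReal.ofReal_tsum_of_nonneg
        (fun n => by positivity) summable_odd]
      exact ENNReal.ofReal_ne_top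
    rw [setIntegral_congr_fun measurableSet_Ioo
      (fun x hx => ((hasSum_pointwise hx).tsum_eq).symm),
      MeasureTheory.integral_tsum hmeas hfin, tsum_congr hgval, sum_lemma]
  rw [hcong, hI]
  field_simp
  ring
end
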